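/- arXiv:1102.3657 — 2 statements merged into one kernel-verified Lean document; each statement's English description precedes it below -/
import Mathlib

section
/- Let G be a topological group, Y a Hausdorff locally convex real topological vector space, n ≥ 1, X a one-parameter subgroup of G, and ψ₀, ψ₁, …, ψₙ : G → Y functions such that each ψⱼ is locally left uniformly continuous and, for every j < n and every g ∈ G, the directional derivative (D_X ψⱼ)(g) exists and equals ψ_{j+1}(g). Then for every g₀ ∈ G there is a neighborhood V₀ of g₀ such that for every neighborhood U of 0 in Y there exists δ > 0 with: for all g ∈ V₀ and all t with 0 < |t| < δ, the Taylor remainder ψ₀(g·X(t)) − Σ_{j=0}^{n} (tʲ/j!)·ψⱼ(g) belongs to tⁿ • U. -/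
open Filter Topology Pointwise

/-- A one-parameter subgroup of a topological group `G`: a continuous homomorphism
from the additive group of reals into `G`. -/
structure OneParamSubgroup (G : Type*) [Group G] [TopologicalSpace G] where
  toFun : ℝ → G
  continuous_toFun : Continuous toFun
  map_add : ∀ s t : ℝ, toFun (s + t) = toFun s * toFun t

/-- `X = X₁ + X₂` in the Trotter sense: `(X₁(t/n) X₂(t/n))^n → X(t)` uniformly on
compact subsets of `ℝ`. -/
def TrotterSum {G : Type*} [Group G] [TopologicalSpace G]
    (X X₁ X₂ : OneParamSubgroup G) : Prop :=
  ∀ K : Set ℝ, IsCompact K → ∀ W ∈ 𝓝 (1 : G), ∃ N : ℕ, ∀ n : ℕ, N ≤ n → ∀ t ∈ K,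
    (X.toFun t)⁻¹ * (X₁.toFun (t / (n : ℝ)) * X₂.toFun (t / (n : ℝ))) ^ n ∈ W

/-- `(D_X φ)(g)` exists and equals `z`. -/
def HasDirDerivAt {G Y : Type*} [Group G] [TopologicalSpace G]
    [AddCommGroup Y] [Module ℝ Y] [TopologicalSpace Y]
    (φ : G → Y) (X : OneParamSubgroup G) (g : G) (z : Y) : Prop :=
  Tendsto (fun t : ℝ => t⁻¹ • (φ (g * X.toFun t) - φ g)) (𝓝[≠] (0 : ℝ)) (𝓝 z)

/-- `φ : G → Y` is locally left uniformly continuous. -/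
def LocallyLeftUC {G Y : Type*} [Group G] [TopologicalSpace G]
    [AddCommGroup Y] [TopologicalSpace Y] (φ : G → Y) : Prop :=
  ∀ g₀ : G, ∃ V ∈ 𝓝 g₀, ∀ U ∈ 𝓝 (0 : Y), ∃ W ∈ 𝓝 (1 : G),
    ∀ x ∈ V, ∀ y ∈ V, x⁻¹ * y ∈ W → φ x - φ y ∈ U

/-- `φ` is of class LUC¹, with `D X g = (D_X φ)(g)`. -/
def IsLUC1 {G Y : Type*} [Group G] [TopologicalSpace G]
    [AddCommGroup Y] [Module ℝ Y] [TopologicalSpace Y]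
    (φ : G → Y) (D : OneParamSubgroup G → G → Y) : Prop :=
  LocallyLeftUC φ ∧ (∀ X g, HasDirDerivAt φ X g (D X g)) ∧
    ∀ X, LocallyLeftUC (D X)

/-!
Pick a closed absolutely convex neighbourhood `C ⊆ U` of `0`. Local left uniform continuity of
`ψ n` puts `ψ n (g * X s) - ψ n g` in `C` for all `g` near `g₀` and all small `|s|`. Along the
curve `s ↦ g * X s` each `ψ j` has derivative `ψ (j + 1)`, and a mean value theorem for closed
convex sets (Hahn–Banach separation reduces it to the real mean value theorem) integrates this
bound `n` times, so the Taylor remainder lies in `|t| ^ n • C = t ^ n • C ⊆ t ^ n • U`.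
-/

open Set

namespace OneParamSubgroup

variable {G : Type*} [Group G] [TopologicalSpace G]

lemma toFun_zero (X : OneParamSubgroup G) : X.toFun 0 = 1 := by
  simpa using X.map_add 0 0

variable [IsTopologicalGroup G]

lemma exists_nhds_mul_mem (X : OneParamSubgroup G) {g₀ : G} {V : Set G} (hV : V ∈ 𝓝 g₀) :
    ∃ V₀ ∈ 𝓝 g₀, ∃ δ > 0, ∀ g ∈ V₀, ∀ s : ℝ, |s| < δ → g * X.toFun s ∈ V := by
  have hcont : Continuous fun p : G × ℝ => p.1 * X.toFun p.2 :=
    continuous_fst.mul (X.continuous_toFun.comp continuous_snd)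
  have hpre : (fun p : G × ℝ => p.1 * X.toFun p.2) ⁻¹' V ∈ 𝓝 g₀ ×ˢ 𝓝 0 := by
    rw [← nhds_prod_eq]
    exact hcont.continuousAt.preimage_mem_nhds (by simpa [X.toFun_zero] using hV)
  obtain ⟨V₀, hV₀, T, hT, hsub⟩ := mem_prod_iff.mp hpre
  obtain ⟨δ, hδ, hball⟩ := Metric.mem_nhds_iff.mp hT
  exact ⟨V₀, hV₀, δ, hδ, fun g hg s hs =>
    hsub (mk_mem_prod hg (hball (by simpa [Real.dist_eq] using hs)))⟩

end OneParamSubgroup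

lemma LocallyLeftUC.exists_nhds_sub_mem {G Y : Type*} [Group G] [TopologicalSpace G]
    [IsTopologicalGroup G] [AddCommGroup Y] [TopologicalSpace Y] {φ : G → Y}
    (hφ : LocallyLeftUC φ) (X : OneParamSubgroup G) (g₀ : G) :
    ∃ V₀ ∈ 𝓝 g₀, ∀ U ∈ 𝓝 (0 : Y), ∃ δ > 0, ∀ g ∈ V₀, ∀ s : ℝ, |s| < δ →
      φ (g * X.toFun s) - φ g ∈ U := by
  obtain ⟨V, hV, hφV⟩ := hφ g₀
  obtain ⟨V₀, hV₀, δ₀, hδ₀, hmem⟩ := X.exists_nhds_mul_mem hV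
  refine ⟨V₀, hV₀, fun U hU => ?_⟩
  obtain ⟨W, hW, hφW⟩ := hφV U hU
  have hinv : Tendsto (fun s : ℝ => (X.toFun s)⁻¹) (𝓝 0) (𝓝 1) := by
    simpa [X.toFun_zero] using (X.continuous_toFun.tendsto 0).inv
  obtain ⟨δ₁, hδ₁, hinvW⟩ := Metric.eventually_nhds_iff.mp (hinv hW)
  refine ⟨min δ₀ δ₁, lt_min hδ₀ hδ₁, fun g hg s hs => ?_⟩
  refine hφW _ (hmem g hg s (hs.trans_le (min_le_left _ _))) g ?_ ?_
  · simpa [X.toFun_zero] using hmem g hg 0 (by simpa using hδ₀)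
  · simpa using hinvW (by simpa [Real.dist_eq] using hs.trans_le (min_le_right _ _))

lemma hasDerivAt_sum_pow_div_factorial_smul {E : Type*} [NormedAddCommGroup E]
    [NormedSpace ℝ E] (c : ℕ → E) (m : ℕ) (s : ℝ) :
    HasDerivAt (fun x : ℝ => ∑ j ∈ Finset.range (m + 2), (x ^ j / j.factorial) • c j)
      (∑ j ∈ Finset.range (m + 1), (s ^ j / j.factorial) • c (j + 1)) s := by
  have h := HasDerivAt.fun_sum (u := Finset.range (m + 2)) fun j _ =>
    ((hasDerivAt_pow j s).div_const (j.factorial : ℝ)).smul_const (c j)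
  convert h using 1
  rw [Finset.sum_range_succ' _ (m + 1)]
  simp only [Nat.cast_zero, zero_mul, zero_div, zero_smul, add_zero]
  refine Finset.sum_congr rfl fun j _ => ?_
  rw [Nat.add_sub_cancel, Nat.factorial_succ]
  push_cast
  field_simp

section WeakDeriv

variable {Y : Type*} [AddCommGroup Y] [Module ℝ Y] [TopologicalSpace Y]

def HasWeakDerivAt (f : ℝ → Y) (f' : Y) (s : ℝ) : Prop :=
  ∀ ℓ : StrongDual ℝ Y, HasDerivAt (fun x => ℓ (f x)) (ℓ f') s

lemma HasWeakDerivAt.sub {f g : ℝ → Y} {f' g' : Y} {s : ℝ} (hf : HasWeakDerivAt f f' s)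
    (hg : HasWeakDerivAt g g' s) : HasWeakDerivAt (fun x => f x - g x) (f' - g') s :=
  fun ℓ => by simpa only [map_sub] using (hf ℓ).fun_sub (hg ℓ)

lemma hasWeakDerivAt_sum_pow_div_factorial_smul (c : ℕ → Y) (m : ℕ) (s : ℝ) :
    HasWeakDerivAt (fun x : ℝ => ∑ j ∈ Finset.range (m + 2), (x ^ j / j.factorial) • c j)
      (∑ j ∈ Finset.range (m + 1), (s ^ j / j.factorial) • c (j + 1)) s :=
  fun ℓ => by simpa using hasDerivAt_sum_pow_div_factorial_smul (fun j => ℓ (c j)) m s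

lemma HasDirDerivAt.hasWeakDerivAt_mul_toFun {G : Type*} [Group G] [TopologicalSpace G]
    {φ : G → Y} {X : OneParamSubgroup G} {g : G} {s : ℝ} {z : Y}
    (h : HasDirDerivAt φ X (g * X.toFun s) z) :
    HasWeakDerivAt (fun x => φ (g * X.toFun x)) z s := fun ℓ => by
  rw [hasDerivAt_iff_tendsto_slope_zero]
  refine ((ℓ.continuous.tendsto z).comp h).congr fun t => ?_
  simp [X.map_add, mul_assoc]

variable [IsTopologicalAddGroup Y] [ContinuousSMul ℝ Y] [LocallyConvexSpace ℝ Y]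

theorem sub_mem_smul_of_hasWeakDerivAt {K : Set Y} (hKconv : Convex ℝ K) (hKcl : IsClosed K)
    {a b : ℝ} (hab : a < b) {f f' : ℝ → Y} (hf : ∀ s ∈ Icc a b, HasWeakDerivAt f (f' s) s)
    (hK : ∀ s ∈ Icc a b, f' s ∈ K) : f b - f a ∈ (b - a) • K := by
  by_contra hnot
  obtain ⟨ℓ, u, hℓK, hℓf⟩ := geometric_hahn_banach_closed_point (hKconv.smul _)
    (hKcl.smul_of_ne_zero (sub_ne_zero.2 hab.ne')) hnot
  obtain ⟨c, hc, hslope⟩ := exists_hasDerivAt_eq_slope (fun x => ℓ (f x)) (fun x => ℓ (f' x)) hab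
    (fun s hs => (hf s hs ℓ).continuousAt.continuousWithinAt)
    (fun s hs => hf s (Ioo_subset_Icc_self hs) ℓ)
  have hℓ : ℓ (f b - f a) = ℓ ((b - a) • f' c) := by
    rw [map_sub, map_smul, smul_eq_mul, hslope]
    field_simp [sub_ne_zero.2 hab.ne']
  exact (hℓK _ (smul_mem_smul_set (hK c (Ioo_subset_Icc_self hc)))).not_gt (hℓ ▸ hℓf)

theorem sub_mem_abs_smul_of_hasWeakDerivAt {K : Set Y} (hKconv : Convex ℝ K) (hKcl : IsClosed K)
    (hKbal : Balanced ℝ K) {t : ℝ} {f f' : ℝ → Y}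
    (hf : ∀ s ∈ uIcc 0 t, HasWeakDerivAt f (f' s) s) (hK : ∀ s ∈ uIcc 0 t, f' s ∈ K) :
    f t - f 0 ∈ |t| • K := by
  rcases lt_trichotomy t 0 with ht | rfl | ht
  · rw [uIcc_of_ge ht.le] at hf hK
    have h := sub_mem_smul_of_hasWeakDerivAt hKconv hKcl ht hf hK
    rwa [abs_of_neg ht, ← neg_sub, ← hKbal.neg_eq, smul_set_neg, Set.neg_mem_neg, ← zero_sub]
  · simp [zero_smul_set ⟨_, hK 0 (by simp)⟩]
  · rw [uIcc_of_le ht.le] at hf hK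
    simpa [abs_of_pos ht] using sub_mem_smul_of_hasWeakDerivAt hKconv hKcl ht hf hK

theorem taylor_sub_mem_abs_pow_smul {C : Set Y} (hCconv : Convex ℝ C) (hCcl : IsClosed C)
    (hCbal : Balanced ℝ C) {δ : ℝ} (m : ℕ) (f : ℕ → ℝ → Y)
    (hf : ∀ j < m, ∀ s, |s| < δ → HasWeakDerivAt (f j) (f (j + 1) s) s)
    (hC : ∀ s, |s| < δ → f m s - f m 0 ∈ C) {t : ℝ} (ht : |t| < δ) :
    f 0 t - ∑ j ∈ Finset.range (m + 1), (t ^ j / j.factorial) • f j 0 ∈ |t| ^ m • C := by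
  induction m generalizing f t with
  | zero => simpa using hC t ht
  | succ m ih =>
    set R : ℝ → Y := fun s => f 0 s - ∑ j ∈ Finset.range (m + 2), (s ^ j / j.factorial) • f j 0
    set R' : ℝ → Y := fun s =>
      f 1 s - ∑ j ∈ Finset.range (m + 1), (s ^ j / j.factorial) • f (j + 1) 0
    have hR'C : ∀ s, |s| < δ → R' s ∈ |s| ^ m • C := fun s hs =>
      ih (fun j => f (j + 1)) (fun j hj => hf (j + 1) (by omega)) hC hs
    have hR : ∀ s, |s| < δ → HasWeakDerivAt R (R' s) s := fun s hs =>
      (hf 0 (by omega) s hs).sub (hasWeakDerivAt_sum_pow_div_factorial_smul _ m s)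
    have hR0 : R 0 = 0 := by
      simp [R, Finset.sum_range_succ' _ (m + 1)]
    rcases eq_or_ne t 0 with rfl | ht0
    · have h0C : (0 : Y) ∈ C := by simpa using hC 0 ht
      show R 0 ∈ _
      rw [hR0]
      exact zero_mem_smul_set h0C
    have hs_le : ∀ s ∈ uIcc 0 t, |s| ≤ |t| := fun s hs => by
      simpa using abs_sub_left_of_mem_uIcc hs
    have h := sub_mem_abs_smul_of_hasWeakDerivAt (hCconv.smul _)
      (hCcl.smul_of_ne_zero (pow_ne_zero _ (abs_ne_zero.2 ht0))) (hCbal.smul _)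
      (fun s hs => hR s ((hs_le s hs).trans_lt ht))
      (fun s hs => hCbal.smul_mono (b := |t| ^ m)
        (by simpa using pow_le_pow_left₀ (abs_nonneg s) (hs_le s hs) m)
        (hR'C s ((hs_le s hs).trans_lt ht)))
    rwa [hR0, sub_zero, smul_smul, ← pow_succ'] at h

end WeakDeriv

theorem taylor_formula_LUC_general
    {G Y : Type*} [Group G] [TopologicalSpace G] [IsTopologicalGroup G]
    [AddCommGroup Y] [Module ℝ Y] [TopologicalSpace Y] [IsTopologicalAddGroup Y]
    [ContinuousSMul ℝ Y] [LocallyConvexSpace ℝ Y]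
    (n : ℕ) (X : OneParamSubgroup G) (ψ : ℕ → G → Y)
    (hUC : ∀ j ≤ n, LocallyLeftUC (ψ j))
    (hD : ∀ j < n, ∀ g : G, HasDirDerivAt (ψ j) X g (ψ (j + 1) g)) :
    ∀ g₀ : G, ∃ V₀ ∈ 𝓝 g₀, ∀ U ∈ 𝓝 (0 : Y), ∃ δ > (0 : ℝ),
      ∀ g ∈ V₀, ∀ t : ℝ, 0 < |t| → |t| < δ →
        ψ 0 (g * X.toFun t)
          - ∑ j ∈ Finset.range (n + 1), (t ^ j / (j.factorial : ℝ)) • ψ j g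
          ∈ (t ^ n) • U := by
  intro g₀
  obtain ⟨V₀, hV₀, hψV₀⟩ := LocallyLeftUC.exists_nhds_sub_mem (hUC n le_rfl) X g₀
  refine ⟨V₀, hV₀, fun U hU => ?_⟩
  obtain ⟨C, ⟨hC, hCcl, hCbal, hCconv⟩, hCU⟩ :=
    (nhds_hasBasis_absConvex_closed ℝ Y).mem_iff.mp hU
  obtain ⟨δ, hδ, hψC⟩ := hψV₀ C hC
  refine ⟨δ, hδ, fun g hg t _ ht => ?_⟩
  have h := taylor_sub_mem_abs_pow_smul hCconv hCcl hCbal n (fun j s => ψ j (g * X.toFun s))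
    (fun j hj s _ => (hD j hj _).hasWeakDerivAt_mul_toFun)
    (fun s hs => by simpa [X.toFun_zero] using hψC g hg s hs) ht
  rw [hCbal.smul_congr (by simp : ‖|t| ^ n‖ = ‖t ^ n‖)] at h
  simpa [X.toFun_zero] using smul_set_mono hCU h

theorem taylor_formula_LUC
    {G Y : Type*} [Group G] [TopologicalSpace G] [IsTopologicalGroup G]
    [AddCommGroup Y] [Module ℝ Y] [TopologicalSpace Y] [IsTopologicalAddGroup Y]
    [ContinuousSMul ℝ Y] [LocallyConvexSpace ℝ Y] [T2Space Y]
    (n : ℕ) (hn : 1 ≤ n) (X : OneParamSubgroup G) (ψ : ℕ → G → Y)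
    (hUC : ∀ j ≤ n, LocallyLeftUC (ψ j))
    (hD : ∀ j < n, ∀ g : G, HasDirDerivAt (ψ j) X g (ψ (j + 1) g)) :
    ∀ g₀ : G, ∃ V₀ ∈ 𝓝 g₀, ∀ U ∈ 𝓝 (0 : Y), ∃ δ > (0 : ℝ),
      ∀ g ∈ V₀, ∀ t : ℝ, 0 < |t| → |t| < δ →
        ψ 0 (g * X.toFun t)
          - ∑ j ∈ Finset.range (n + 1), (t ^ j / (j.factorial : ℝ)) • ψ j g
          ∈ (t ^ n) • U :=
  taylor_formula_LUC_general n X ψ hUC hD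
end

section
/- Let G be a topological group, Y a Hausdorff locally convex real topological vector space, and φ : G → Y a function of class LUC². If X, X₁, X₂ are one-parameter subgroups of G such that for every compact set K ⊆ ℝ and every neighborhood W of the identity in G there exists N with: for all n ≥ N and all t ∈ K, X(t²)⁻¹·(X₁(t/n)·X₂(t/n)·X₁(t/n)⁻¹·X₂(t/n)⁻¹)^{n²} ∈ W, then for every g ∈ G one has (D_X φ)(g) = (D_{X₁}(D_{X₂} φ))(g) − (D_{X₂}(D_{X₁} φ))(g). -/
open Filter Topology Pointwise

/-- `φ` is of class LUC², with first derivatives `D` and iterated derivatives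
`D2 Z₁ Z₂ g = (D_{Z₁}(D_{Z₂} φ))(g)`. -/
def IsLUC2 {G Y : Type*} [Group G] [TopologicalSpace G]
    [AddCommGroup Y] [Module ℝ Y] [TopologicalSpace Y]
    (φ : G → Y) (D : OneParamSubgroup G → G → Y)
    (D2 : OneParamSubgroup G → OneParamSubgroup G → G → Y) : Prop :=
  IsLUC1 φ D ∧ (∀ Z₁ Z₂ g, HasDirDerivAt (D Z₂) Z₁ g (D2 Z₁ Z₂ g)) ∧
    ∀ Z₁ Z₂, LocallyLeftUC (D2 Z₁ Z₂)

/-!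
By Hahn–Banach it suffices to treat the real functions `ℓ ∘ φ`. For such an `f`, write
`c(u) = ⁅X₁(u), X₂(u)⁆`. Taylor expansion along the four edges of the commutator path gives
`f(h c(u)) - f(h) = u² (D_{X₁}D_{X₂} f - D_{X₂}D_{X₁} f)(g) + o(u²)` uniformly for `h` near `g`.
Summing over `h = g c(s/n)^k`, `k < n²`, gives the same expansion of `f(g c(s/n)^{n²})` with
`u = s`, and as `n → ∞` this becomes the expansion of `f(g X(s²))` that identifies `D_X f (g)`.
The points `g c(s/n)^k` stay near `g`: every `k ≤ n²` is `j² + a² + c² - b²` with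
`j, a, b, c ≤ n`, and the hypothesis controls the powers `c(s/n)^{m²}` for `m ≤ n`.
-/

open scoped commutatorElement

namespace OneParamSubgroup

variable {G : Type*} [Group G] [TopologicalSpace G] (Z : OneParamSubgroup G)

theorem map_zero : Z.toFun 0 = 1 := by
  simpa using Z.map_add 0 0

theorem map_neg (t : ℝ) : Z.toFun (-t) = (Z.toFun t)⁻¹ :=
  eq_inv_of_mul_eq_one_left (by rw [← Z.map_add, neg_add_cancel, map_zero])

theorem tendsto_one : Tendsto Z.toFun (𝓝 0) (𝓝 1) :=
  Z.map_zero ▸ Z.continuous_toFun.tendsto 0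

theorem tendsto_commutator_one [IsTopologicalGroup G] (X₁ X₂ : OneParamSubgroup G) :
    Tendsto (fun w => ⁅X₁.toFun w, X₂.toFun w⁆) (𝓝 0) (𝓝 1) := by
  simpa [commutatorElement_def] using
    ((X₁.tendsto_one.mul X₂.tendsto_one).mul X₁.tendsto_one.inv).mul X₂.tendsto_one.inv

end OneParamSubgroup

theorem LocallyLeftUC.continuous {G Y : Type*} [Group G] [TopologicalSpace G] [ContinuousMul G]
    [AddCommGroup Y] [TopologicalSpace Y] [ContinuousSub Y] {ψ : G → Y}
    (h : LocallyLeftUC ψ) : Continuous ψ := by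
  refine continuous_iff_continuousAt.2 fun a => ?_
  obtain ⟨V, hV, hUC⟩ := h a
  have hdiff : Tendsto (fun y => ψ a - ψ y) (𝓝 a) (𝓝 0) := tendsto_def.2 fun U hU => by
    obtain ⟨W, hW, hWU⟩ := hUC U hU
    have hW' : ∀ᶠ y in 𝓝 a, a⁻¹ * y ∈ W :=
      (continuous_const_mul a⁻¹).tendsto' a 1 (inv_mul_cancel a) hW
    filter_upwards [hV, hW'] with y hyV hyW using hWU a (mem_of_mem_nhds hV) y hyV hyW
  simpa [ContinuousAt] using (tendsto_const_nhds (x := ψ a)).sub hdiff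

theorem HasDirDerivAt.continuousLinearMap_comp {G Y Y' : Type*} [Group G] [TopologicalSpace G]
    [AddCommGroup Y] [Module ℝ Y] [TopologicalSpace Y]
    [AddCommGroup Y'] [Module ℝ Y'] [TopologicalSpace Y']
    (ℓ : Y →L[ℝ] Y') {φ : G → Y} {Z : OneParamSubgroup G} {a : G} {z : Y}
    (h : HasDirDerivAt φ Z a z) : HasDirDerivAt (fun x => ℓ (φ x)) Z a (ℓ z) := by
  simpa only [HasDirDerivAt, Function.comp_def, map_sub, map_smul] using
    (ℓ.continuous.tendsto z).comp h

section Increments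

variable {G E : Type*} [Group G] [TopologicalSpace G] [NormedAddCommGroup E] [NormedSpace ℝ E]
  {f ζ ξ : G → E} {Z : OneParamSubgroup G} {a : G}

theorem HasDirDerivAt.hasDerivAt_comp_mul {r : ℝ} {z : E}
    (h : HasDirDerivAt f Z (a * Z.toFun r) z) :
    HasDerivAt (fun r => f (a * Z.toFun r)) z r := by
  rw [hasDerivAt_iff_tendsto_slope_zero]
  simpa only [HasDirDerivAt, mul_assoc, ← Z.map_add, add_comm r] using h

theorem norm_sub_le_of_hasDerivAt_of_norm_le {F F' : ℝ → E} {u C : ℝ}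
    (hF : ∀ r, HasDerivAt F (F' r) r) (hF' : ∀ r, |r| ≤ |u| → ‖F' r‖ ≤ C) :
    ‖F u - F 0‖ ≤ C * |u| := by
  have hball : ∀ r, r ∈ Metric.closedBall (0 : ℝ) |u| ↔ |r| ≤ |u| := by
    simp [Real.norm_eq_abs]
  simpa using (convex_closedBall (0 : ℝ) |u|).norm_image_sub_le_of_norm_hasDerivWithin_le
    (fun r _ => (hF r).hasDerivWithinAt) (fun r hr => hF' r ((hball r).1 hr))
    ((hball 0).2 (by simp)) ((hball u).2 le_rfl)

theorem norm_sub_sub_smul_le_of_hasDirDerivAt (hf : ∀ b, HasDirDerivAt f Z b (ζ b))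
    {u ε : ℝ} {c : E} (hζ : ∀ r, |r| ≤ |u| → ‖ζ (a * Z.toFun r) - c‖ ≤ ε) :
    ‖f (a * Z.toFun u) - f a - u • c‖ ≤ ε * |u| := by
  have hF : ∀ r, HasDerivAt (fun r => f (a * Z.toFun r) - f a - r • c) (ζ (a * Z.toFun r) - c) r :=
    fun r => by
      simpa using ((hf _).hasDerivAt_comp_mul.sub_const (f a)).fun_sub
        ((hasDerivAt_id r).smul_const c)
  simpa [Z.map_zero] using norm_sub_le_of_hasDerivAt_of_norm_le hF hζ

theorem norm_taylor_two_le_of_hasDirDerivAt (hf : ∀ b, HasDirDerivAt f Z b (ζ b))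
    (hζ : ∀ b, HasDirDerivAt ζ Z b (ξ b)) {u ε : ℝ} {c : E}
    (hξ : ∀ r, |r| ≤ |u| → ‖ξ (a * Z.toFun r) - c‖ ≤ ε) :
    ‖f (a * Z.toFun u) - f a - u • ζ a - (u ^ 2 / 2) • c‖ ≤ ε * u ^ 2 := by
  have hF : ∀ r, HasDerivAt (fun r => f (a * Z.toFun r) - f a - r • ζ a - (r ^ 2 / 2) • c)
      (ζ (a * Z.toFun r) - ζ a - r • c) r := fun r => by
    have hsq : HasDerivAt (fun r : ℝ => r ^ 2 / 2) r r := by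
      simpa using (hasDerivAt_pow 2 r).div_const 2
    simpa using (((hf _).hasDerivAt_comp_mul.sub_const (f a)).fun_sub
      ((hasDerivAt_id r).smul_const (ζ a))).fun_sub (hsq.smul_const c)
  have hF' : ∀ r, |r| ≤ |u| → ‖ζ (a * Z.toFun r) - ζ a - r • c‖ ≤ ε * |u| := fun r hr =>
    (norm_sub_sub_smul_le_of_hasDirDerivAt hζ fun r' hr' => hξ r' (hr'.trans hr)).trans
      (mul_le_mul_of_nonneg_left hr ((norm_nonneg _).trans (hξ 0 (by simp))))
  simpa [Z.map_zero, mul_assoc, ← sq, sq_abs] using norm_sub_le_of_hasDerivAt_of_norm_le hF hF'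

end Increments

section CommutatorIncrement

variable {G : Type*} [Group G] [TopologicalSpace G] {f : G → ℝ}
  {d : OneParamSubgroup G → G → ℝ} {e : OneParamSubgroup G → OneParamSubgroup G → G → ℝ}

theorem abs_commutator_increment_le (hd : ∀ Z a, HasDirDerivAt f Z a (d Z a))
    (he : ∀ Z₁ Z₂ a, HasDirDerivAt (d Z₂) Z₁ a (e Z₁ Z₂ a))
    {X₁ X₂ : OneParamSubgroup G} {g h : G} {u ε : ℝ}
    (hnear : ∀ v₁ v₂ v₃ v₄ : ℝ, |v₁| ≤ |u| → |v₂| ≤ |u| → |v₃| ≤ |u| → |v₄| ≤ |u| →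
      ∀ Z₁ ∈ ({X₁, X₂} : Set _), ∀ Z₂ ∈ ({X₁, X₂} : Set _),
        |e Z₁ Z₂ (h * X₁.toFun v₁ * X₂.toFun v₂ * X₁.toFun v₃ * X₂.toFun v₄) - e Z₁ Z₂ g| ≤ ε) :
    |f (h * ⁅X₁.toFun u, X₂.toFun u⁆) - f h - u ^ 2 * (e X₁ X₂ g - e X₂ X₁ g)| ≤
      8 * ε * u ^ 2 := by
  set a₁ := h * X₁.toFun u
  set a₂ := a₁ * X₂.toFun u
  set a₃ := a₂ * X₁.toFun (-u)
  have hpath : h * ⁅X₁.toFun u, X₂.toFun u⁆ = a₃ * X₂.toFun (-u) := by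
    simp [a₃, a₂, a₁, commutatorElement_def, OneParamSubgroup.map_neg, mul_assoc]
  -- Taylor expansion along the four edges `h → a₁ → a₂ → a₃ → h * ⁅X₁ u, X₂ u⁆`; the first
  -- derivatives at the corners are compared by the mean value theorem.
  have hu : |u| ≤ |u| := le_rfl
  have h0 : |(0 : ℝ)| ≤ |u| := by simp
  have hneg : |-u| ≤ |u| := (abs_neg u).le
  have edge₁ : ∀ r, |r| ≤ |u| → ∀ Z₁ ∈ ({X₁, X₂} : Set _), ∀ Z₂ ∈ ({X₁, X₂} : Set _),
      |e Z₁ Z₂ (h * X₁.toFun r) - e Z₁ Z₂ g| ≤ ε := fun r hr => by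
    simpa [OneParamSubgroup.map_zero] using hnear r 0 0 0 hr h0 h0 h0
  have edge₂ : ∀ r, |r| ≤ |u| → ∀ Z₁ ∈ ({X₁, X₂} : Set _), ∀ Z₂ ∈ ({X₁, X₂} : Set _),
      |e Z₁ Z₂ (a₁ * X₂.toFun r) - e Z₁ Z₂ g| ≤ ε := fun r hr => by
    simpa [OneParamSubgroup.map_zero] using hnear u r 0 0 hu hr h0 h0
  have edge₃ : ∀ r, |r| ≤ |-u| → ∀ Z₁ ∈ ({X₁, X₂} : Set _), ∀ Z₂ ∈ ({X₁, X₂} : Set _),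
      |e Z₁ Z₂ (a₂ * X₁.toFun r) - e Z₁ Z₂ g| ≤ ε := fun r hr => by
    simpa [OneParamSubgroup.map_zero] using hnear u u r 0 hu hu (hr.trans hneg) h0
  have edge₄ : ∀ r, |r| ≤ |-u| → ∀ Z₁ ∈ ({X₁, X₂} : Set _), ∀ Z₂ ∈ ({X₁, X₂} : Set _),
      |e Z₁ Z₂ (a₃ * X₂.toFun r) - e Z₁ Z₂ g| ≤ ε := fun r hr =>
    hnear u u (-u) r hu hu hneg (hr.trans hneg)
  have T₁ := norm_taylor_two_le_of_hasDirDerivAt (hd X₁) (he X₁ X₁)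
    fun r hr => edge₁ r hr X₁ (by simp) X₁ (by simp)
  have T₂ := norm_taylor_two_le_of_hasDirDerivAt (hd X₂) (he X₂ X₂)
    fun r hr => edge₂ r hr X₂ (by simp) X₂ (by simp)
  have T₃ := norm_taylor_two_le_of_hasDirDerivAt (hd X₁) (he X₁ X₁)
    fun r hr => edge₃ r hr X₁ (by simp) X₁ (by simp)
  have T₄ := norm_taylor_two_le_of_hasDirDerivAt (hd X₂) (he X₂ X₂)
    fun r hr => edge₄ r hr X₂ (by simp) X₂ (by simp)
  have M₁ := norm_sub_sub_smul_le_of_hasDirDerivAt (he X₁ X₁)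
    fun r hr => edge₁ r hr X₁ (by simp) X₁ (by simp)
  have M₂ := norm_sub_sub_smul_le_of_hasDirDerivAt (he X₂ X₁)
    fun r hr => edge₂ r hr X₂ (by simp) X₁ (by simp)
  have M₃ := norm_sub_sub_smul_le_of_hasDirDerivAt (he X₂ X₂)
    fun r hr => edge₂ r hr X₂ (by simp) X₂ (by simp)
  have M₄ := norm_sub_sub_smul_le_of_hasDirDerivAt (he X₁ X₂)
    fun r hr => edge₃ r hr X₁ (by simp) X₂ (by simp)
  have scale : ∀ {x : ℝ}, |x| ≤ ε * |u| → |u * x| ≤ ε * u ^ 2 := fun hx => by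
    rw [abs_mul, ← sq_abs u]
    nlinarith [abs_nonneg u]
  simp only [Real.norm_eq_abs, smul_eq_mul, abs_neg, neg_sq] at T₁ T₂ T₃ T₄ M₁ M₂ M₃ M₄
  replace M₁ := scale M₁
  replace M₂ := scale M₂
  replace M₃ := scale M₃
  replace M₄ := scale M₄
  rw [hpath]
  rw [abs_le] at T₁ T₂ T₃ T₄ M₁ M₂ M₃ M₄ ⊢
  constructor <;> linarith

end CommutatorIncrement

theorem Nat.exists_add_sq_eq_sq_add_sq_add_sq {n k : ℕ} (hk : k ≤ n ^ 2) :
    ∃ j a b c : ℕ, j ≤ n ∧ a ≤ n ∧ b ≤ n ∧ c ≤ n ∧ k + b ^ 2 = j ^ 2 + a ^ 2 + c ^ 2 := by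
  set j := k.sqrt
  have hjk : j ^ 2 ≤ k := Nat.sqrt_le' k
  have hkj : k < (j + 1) ^ 2 := Nat.lt_succ_sqrt' k
  have hjn : j ≤ n := by simpa [Nat.sqrt_eq'] using Nat.sqrt_le_sqrt hk
  obtain ⟨q, hq | hq⟩ := Nat.even_or_odd' (k - j ^ 2)
  · rcases q with _ | q
    · exact ⟨j, 0, 0, 0, hjn, by omega, by omega, by omega, by omega⟩
    · have hk' : k = j ^ 2 + 2 * q + 2 := by omega
      refine ⟨j, q + 1, q, 1, hjn, by nlinarith, by nlinarith, by nlinarith, by rw [hk']; ring⟩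
  · have hk' : k = j ^ 2 + 2 * q + 1 := by omega
    exact ⟨j, q + 1, q, 0, hjn, by nlinarith, by nlinarith, by omega, by rw [hk']; ring⟩

def TrotterBracket {G : Type*} [Group G] [TopologicalSpace G]
    (X X₁ X₂ : OneParamSubgroup G) : Prop :=
  ∀ K : Set ℝ, IsCompact K → ∀ W ∈ 𝓝 (1 : G), ∃ N : ℕ, ∀ n : ℕ, N ≤ n → ∀ t ∈ K,
    (X.toFun (t ^ 2))⁻¹ * ⁅X₁.toFun (t / n), X₂.toFun (t / n)⁆ ^ (n ^ 2) ∈ W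

namespace TrotterBracket

variable {G : Type*} [Group G] [TopologicalSpace G] [IsTopologicalGroup G]
  {X X₁ X₂ : OneParamSubgroup G}

theorem tendsto_pow (hX : TrotterBracket X X₁ X₂) (t : ℝ) :
    Tendsto (fun n : ℕ => ⁅X₁.toFun (t / n), X₂.toFun (t / n)⁆ ^ (n ^ 2)) atTop
      (𝓝 (X.toFun (t ^ 2))) := by
  have h : Tendsto
      (fun n : ℕ => (X.toFun (t ^ 2))⁻¹ * ⁅X₁.toFun (t / n), X₂.toFun (t / n)⁆ ^ (n ^ 2))
      atTop (𝓝 1) := fun W hW => by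
    obtain ⟨N, hN⟩ := hX {t} isCompact_singleton W hW
    exact eventually_atTop.2 ⟨N, fun n hn => hN n hn t rfl⟩
  have h' := h.const_mul (X.toFun (t ^ 2))
  rw [mul_one] at h'
  exact h'.congr fun n => mul_inv_cancel_left _ _

theorem eventually_sq_pow_mem (hX : TrotterBracket X X₁ X₂) {V : Set G} (hV : V ∈ 𝓝 1) :
    ∀ᶠ s in 𝓝 (0 : ℝ), ∀ᶠ n : ℕ in atTop, ∀ m ≤ n,
      ⁅X₁.toFun (s / n), X₂.toFun (s / n)⁆ ^ (m ^ 2) ∈ V := by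
  obtain ⟨U, hU, hUU⟩ := exists_nhds_one_split hV
  have hXsq : Tendsto (fun t : ℝ => X.toFun (t ^ 2)) (𝓝 0) (𝓝 1) :=
    X.tendsto_one.comp (by simpa using (continuous_pow 2).tendsto (0 : ℝ))
  obtain ⟨δ, hδ, hδU⟩ := Metric.nhds_basis_closedBall.mem_iff.1 (hXsq hU)
  obtain ⟨N, hN⟩ := hX _ (isCompact_closedBall 0 δ) U hU
  filter_upwards [Metric.closedBall_mem_nhds (0 : ℝ) hδ] with s hs
  -- Finitely many `m < N` are handled by continuity, the others by the hypothesis at `s m / n`.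
  have hsmall : ∀ᶠ n : ℕ in atTop, ∀ m ∈ Finset.range N,
      ⁅X₁.toFun (s / n), X₂.toFun (s / n)⁆ ^ (m ^ 2) ∈ V := by
    refine eventually_all_finset _ |>.2 fun m _ => ?_
    have h := ((X₁.tendsto_commutator_one X₂).comp
      (tendsto_const_div_atTop_nhds_zero_nat s)).pow (m ^ 2)
    rw [one_pow] at h
    exact h hV
  filter_upwards [hsmall] with n hn m hmn
  rcases lt_or_ge m N with hm | hm
  · exact hn m (Finset.mem_range.2 hm)
  rcases m.eq_zero_or_pos with rfl | hm0
  · simpa using mem_of_mem_nhds hV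
  set t := s * m / n
  have htm : t / m = s / n := by
    have : (n : ℝ) ≠ 0 := by norm_cast; omega
    simp only [t]
    field_simp
  have ht : t ∈ Metric.closedBall (0 : ℝ) δ := by
    rw [mem_closedBall_zero_iff, Real.norm_eq_abs] at hs ⊢
    refine le_trans ?_ hs
    rw [abs_div, abs_mul, Nat.abs_cast, Nat.abs_cast, mul_div_assoc]
    exact mul_le_of_le_one_right (abs_nonneg s)
      (div_le_one_of_le₀ (by exact_mod_cast hmn) (by positivity))
  simpa [htm] using hUU _ (hδU ht) _ (hN m hm t ht)

theorem eventually_pow_mem (hX : TrotterBracket X X₁ X₂) {W : Set G} (hW : W ∈ 𝓝 1) :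
    ∀ᶠ s in 𝓝 (0 : ℝ), ∀ᶠ n : ℕ in atTop, ∀ k ≤ n ^ 2,
      ⁅X₁.toFun (s / n), X₂.toFun (s / n)⁆ ^ k ∈ W := by
  obtain ⟨V, hV, hV4⟩ := exists_nhds_one_split4 hW
  filter_upwards [hX.eventually_sq_pow_mem (inter_mem hV (inv_mem_nhds_one G hV))] with s hs
  filter_upwards [hs] with n hn k hk
  obtain ⟨j, a, b, c, hj, ha, hb, hc, hsum⟩ := Nat.exists_add_sq_eq_sq_add_sq_add_sq hk
  set x := ⁅X₁.toFun (s / n), X₂.toFun (s / n)⁆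
  have hxk : x ^ k = x ^ (j ^ 2) * x ^ (a ^ 2) * x ^ (c ^ 2) * (x ^ (b ^ 2))⁻¹ := by
    rw [eq_mul_inv_iff_mul_eq, ← pow_add, ← pow_add, ← pow_add, hsum]
  rw [hxk]
  exact hV4 (hn j hj).1 (hn a ha).1 (hn c hc).1 (hn b hb).2

end TrotterBracket

theorem abs_sub_sub_mul_le_of_forall_abs_succ_sub_sub_le {F : ℕ → ℝ} {a b : ℝ} {N : ℕ}
    (h : ∀ k < N, |F (k + 1) - F k - a| ≤ b) : |F N - F 0 - N * a| ≤ N * b := by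
  induction N with
  | zero => simp
  | succ N ih =>
    have hN := ih fun k hk => h k (by omega)
    have hstep := h N (by omega)
    push_cast
    rw [abs_le] at hN hstep ⊢
    constructor <;> linarith

section ScalarCase

variable {G : Type*} [Group G] [TopologicalSpace G] [IsTopologicalGroup G] {f : G → ℝ}
  {d : OneParamSubgroup G → G → ℝ} {e : OneParamSubgroup G → OneParamSubgroup G → G → ℝ}
  {X X₁ X₂ : OneParamSubgroup G} {g : G}

theorem exists_abs_commutator_increment_le (hd : ∀ Z a, HasDirDerivAt f Z a (d Z a))
    (he : ∀ Z₁ Z₂ a, HasDirDerivAt (d Z₂) Z₁ a (e Z₁ Z₂ a))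
    (hc : ∀ Z₁ Z₂, ContinuousAt (e Z₁ Z₂) g) {ε : ℝ} (hε : 0 < ε) :
    ∃ W ∈ 𝓝 (1 : G), ∃ δ > 0, ∀ x ∈ W, ∀ u : ℝ, |u| ≤ δ →
      |f (g * x * ⁅X₁.toFun u, X₂.toFun u⁆) - f (g * x) - u ^ 2 * (e X₁ X₂ g - e X₂ X₁ g)| ≤
        8 * ε * u ^ 2 := by
  set S : Set (OneParamSubgroup G) := {X₁, X₂}
  have hS : S.Finite := Set.toFinite S
  have hV : ∀ᶠ p in 𝓝 g, ∀ Z₁ ∈ S, ∀ Z₂ ∈ S, |e Z₁ Z₂ p - e Z₁ Z₂ g| ≤ ε :=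
    hS.eventually_all.2 fun Z₁ _ => hS.eventually_all.2 fun Z₂ _ =>
      (hc Z₁ Z₂).eventually (Metric.closedBall_mem_nhds _ hε)
  have hU : ∀ᶠ y in 𝓝 1, ∀ Z₁ ∈ S, ∀ Z₂ ∈ S, |e Z₁ Z₂ (g * y) - e Z₁ Z₂ g| ≤ ε :=
    (continuous_const_mul g).tendsto' 1 g (mul_one g) hV
  obtain ⟨U₁, hU₁, hU₁U₁⟩ := exists_nhds_one_split hU
  obtain ⟨U₂, hU₂, hU₂4⟩ := exists_nhds_one_split4 hU₁
  obtain ⟨δ, hδ, hδU₂⟩ := Metric.nhds_basis_closedBall.mem_iff.1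
    ((X₁.tendsto_one.eventually hU₂).and (X₂.tendsto_one.eventually hU₂))
  have hsmall : ∀ v : ℝ, |v| ≤ δ → X₁.toFun v ∈ U₂ ∧ X₂.toFun v ∈ U₂ := fun v hv =>
    hδU₂ (by rwa [mem_closedBall_zero_iff, Real.norm_eq_abs])
  refine ⟨U₁, hU₁, δ, hδ, fun x hx u hu => abs_commutator_increment_le hd he ?_⟩
  intro v₁ v₂ v₃ v₄ h₁ h₂ h₃ h₄
  rw [show g * x * X₁.toFun v₁ * X₂.toFun v₂ * X₁.toFun v₃ * X₂.toFun v₄ =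
    g * (x * (X₁.toFun v₁ * X₂.toFun v₂ * X₁.toFun v₃ * X₂.toFun v₄)) by simp only [mul_assoc]]
  exact hU₁U₁ x hx _ (hU₂4 (hsmall v₁ (h₁.trans hu)).1 (hsmall v₂ (h₂.trans hu)).2
    (hsmall v₃ (h₃.trans hu)).1 (hsmall v₄ (h₄.trans hu)).2)

theorem eventually_abs_sub_sub_le (hd : ∀ Z a, HasDirDerivAt f Z a (d Z a))
    (he : ∀ Z₁ Z₂ a, HasDirDerivAt (d Z₂) Z₁ a (e Z₁ Z₂ a)) (hf : Continuous f)
    (hc : ∀ Z₁ Z₂, ContinuousAt (e Z₁ Z₂) g) (hX : TrotterBracket X X₁ X₂) {ε : ℝ}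
    (hε : 0 < ε) :
    ∀ᶠ s in 𝓝 (0 : ℝ),
      |f (g * X.toFun (s ^ 2)) - f g - s ^ 2 * (e X₁ X₂ g - e X₂ X₁ g)| ≤ 8 * ε * s ^ 2 := by
  obtain ⟨W, hW, δ, hδ, hinc⟩ := exists_abs_commutator_increment_le (X₁ := X₁) (X₂ := X₂)
    hd he hc hε
  filter_upwards [hX.eventually_pow_mem hW] with s hs
  have hlim : Tendsto (fun n : ℕ => f (g * ⁅X₁.toFun (s / n), X₂.toFun (s / n)⁆ ^ (n ^ 2))) atTop
      (𝓝 (f (g * X.toFun (s ^ 2)))) :=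
    (hf.tendsto _).comp ((hX.tendsto_pow s).const_mul g)
  refine le_of_tendsto ((hlim.sub_const _).sub_const _).abs ?_
  have hsn : ∀ᶠ n : ℕ in atTop, |s / n| ≤ δ := by
    simpa [abs_div] using
      (tendsto_const_div_atTop_nhds_zero_nat s).eventually (Metric.closedBall_mem_nhds 0 hδ)
  filter_upwards [hs, hsn, eventually_ne_atTop 0] with n hpow hsn hn
  have hsteps := abs_sub_sub_mul_le_of_forall_abs_succ_sub_sub_le
    (F := fun k => f (g * ⁅X₁.toFun (s / n), X₂.toFun (s / n)⁆ ^ k)) (N := n ^ 2)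
    (a := (s / n) ^ 2 * (e X₁ X₂ g - e X₂ X₁ g)) (b := 8 * ε * (s / n) ^ 2)
    fun k hk => by simpa [pow_succ, mul_assoc] using hinc _ (hpow k hk.le) _ hsn
  have hscale : ((n ^ 2 : ℕ) : ℝ) * (s / n) ^ 2 = s ^ 2 := by
    have : (n : ℝ) ≠ 0 := by exact_mod_cast hn
    push_cast
    field_simp
  rw [← mul_assoc, hscale, show ((n ^ 2 : ℕ) : ℝ) * (8 * ε * (s / n) ^ 2) = 8 * ε * s ^ 2 by
    rw [← hscale]; ring] at hsteps
  simpa using hsteps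

theorem HasDirDerivAt.eq_sub_of_trotterBracket (hd : ∀ Z a, HasDirDerivAt f Z a (d Z a))
    (he : ∀ Z₁ Z₂ a, HasDirDerivAt (d Z₂) Z₁ a (e Z₁ Z₂ a)) (hf : Continuous f)
    (hc : ∀ Z₁ Z₂, ContinuousAt (e Z₁ Z₂) g) (hX : TrotterBracket X X₁ X₂) {L : ℝ}
    (hL : HasDirDerivAt f X g L) : L = e X₁ X₂ g - e X₂ X₁ g := by
  have hsq : Tendsto (fun s : ℝ => s ^ 2) (𝓝[≠] 0) (𝓝[≠] 0) :=
    tendsto_nhdsWithin_iff.2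
      ⟨((continuous_pow 2).tendsto' (0 : ℝ) 0 (zero_pow two_ne_zero)).mono_left nhdsWithin_le_nhds,
        eventually_nhdsWithin_of_forall fun _ hs => pow_ne_zero 2 hs⟩
  refine tendsto_nhds_unique (hL.comp hsq) (Metric.tendsto_nhds.2 fun ε hε => ?_)
  filter_upwards [nhdsWithin_le_nhds (eventually_abs_sub_sub_le hd he hf hc hX
    (by positivity : 0 < ε / 16)), self_mem_nhdsWithin] with s hs hs0
  have hs2 : 0 < s ^ 2 := sq_pos_of_ne_zero hs0
  rw [Function.comp_apply, Real.dist_eq, smul_eq_mul, inv_mul_eq_div, div_sub' hs2.ne', abs_div,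
    abs_of_pos hs2, div_lt_iff₀ hs2]
  nlinarith

end ScalarCase

theorem dirDeriv_commutator
    {G Y : Type*} [Group G] [TopologicalSpace G] [IsTopologicalGroup G]
    [AddCommGroup Y] [Module ℝ Y] [TopologicalSpace Y] [IsTopologicalAddGroup Y]
    [ContinuousSMul ℝ Y] [LocallyConvexSpace ℝ Y] [T2Space Y]
    (φ : G → Y) (D : OneParamSubgroup G → G → Y)
    (D2 : OneParamSubgroup G → OneParamSubgroup G → G → Y)
    (hφ : IsLUC2 φ D D2)
    (X X₁ X₂ : OneParamSubgroup G)
    (hcomm : ∀ K : Set ℝ, IsCompact K → ∀ W ∈ 𝓝 (1 : G), ∃ N : ℕ,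
      ∀ n : ℕ, N ≤ n → ∀ t ∈ K,
        (X.toFun (t ^ 2))⁻¹ *
          (X₁.toFun (t / (n : ℝ)) * X₂.toFun (t / (n : ℝ)) *
            (X₁.toFun (t / (n : ℝ)))⁻¹ * (X₂.toFun (t / (n : ℝ)))⁻¹) ^ (n ^ 2) ∈ W)
    (g : G) :
    D X g = D2 X₁ X₂ g - D2 X₂ X₁ g := by
  obtain ⟨⟨hφc, hD, -⟩, hD2, hD2c⟩ := hφ
  refine (SeparatingDual.eq_iff_forall_dual_eq (R := ℝ)).2 fun ℓ => ?_
  rw [map_sub]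
  exact HasDirDerivAt.eq_sub_of_trotterBracket
    (fun Z a => (hD Z a).continuousLinearMap_comp ℓ)
    (fun Z₁ Z₂ a => (hD2 Z₁ Z₂ a).continuousLinearMap_comp ℓ)
    (ℓ.continuous.comp hφc.continuous)
    (fun Z₁ Z₂ => (ℓ.continuous.comp (hD2c Z₁ Z₂).continuous).continuousAt) hcomm
    ((hD X g).continuousLinearMap_comp ℓ)
end
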